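/- arXiv:1211.4125 — 2 statements merged into one kernel-verified Lean document; each statement's English description precedes it below -/
import Mathlib

section
/- If a_{ij} ≤ b_{ij} ≤ c_{ij} for all i, j, then d_4(A,B) ≤ d_4(A,C) and d_4(B,C) ≤ d_4(A,C), where d_4 is the type-2 generalized hesitant normalized distance with parameter p > 0. -/
theorem d4_mono (m : ℕ) (hm : 0 < m) (n : Fin m → ℕ) (hn : ∀ i, 1 ≤ n i)
    (p : ℝ) (hp : 0 < p)
    (a b c : (i : Fin m) → Fin (n i) → ℝ)
    (hab : ∀ i j, a i j ≤ b i j) (hbc : ∀ i j, b i j ≤ c i j) :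
    (1 / (m:ℝ)) * ∑ i, ((1 / (n i : ℝ)) * ∑ j, |a i j - b i j| ^ p) ^ (p⁻¹) ≤
      (1 / (m:ℝ)) * ∑ i, ((1 / (n i : ℝ)) * ∑ j, |a i j - c i j| ^ p) ^ (p⁻¹) ∧
    (1 / (m:ℝ)) * ∑ i, ((1 / (n i : ℝ)) * ∑ j, |b i j - c i j| ^ p) ^ (p⁻¹) ≤
      (1 / (m:ℝ)) * ∑ i, ((1 / (n i : ℝ)) * ∑ j, |a i j - c i j| ^ p) ^ (p⁻¹) := by
  have k1 : ∀ i j, |a i j - b i j| ≤ |a i j - c i j| := fun i j => by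
    rw [abs_of_nonpos (by linarith [hab i j]), abs_of_nonpos (by linarith [hab i j, hbc i j])]
    linarith [hbc i j]
  have k2 : ∀ i j, |b i j - c i j| ≤ |a i j - c i j| := fun i j => by
    rw [abs_of_nonpos (by linarith [hbc i j]), abs_of_nonpos (by linarith [hab i j, hbc i j])]
    linarith [hab i j]
  have main : ∀ x : (i : Fin m) → Fin (n i) → ℝ,
      (∀ i j, |x i j| ≤ |a i j - c i j|) →
      (1 / (m:ℝ)) * ∑ i, ((1 / (n i : ℝ)) * ∑ j, |x i j| ^ p) ^ (p⁻¹) ≤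
        (1 / (m:ℝ)) * ∑ i, ((1 / (n i : ℝ)) * ∑ j, |a i j - c i j| ^ p) ^ (p⁻¹) := by
    intro x hx
    apply mul_le_mul_of_nonneg_left _ (by positivity)
    refine Finset.sum_le_sum fun i _ => ?_
    refine Real.rpow_le_rpow (by positivity) ?_ (by positivity)
    apply mul_le_mul_of_nonneg_left _ (by positivity)
    exact Finset.sum_le_sum fun j _ =>
      Real.rpow_le_rpow (abs_nonneg _) (hx i j) hp.le
  refine ⟨?_, ?_⟩
  · have := main (fun i j => a i j - b i j) (fun i j => k1 i j)
    simpa using this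
  · have := main (fun i j => b i j - c i j) (fun i j => k2 i j)
    simpa using this
end

section
/- The weighted set-theoretic similarity s_12(A,B) = ∑_i w_i · (∑_j min(a_{ij}, b_{ij}))/(∑_j max(a_{ij}, b_{ij})) satisfies: if 0 < a_{ij} ≤ b_{ij} ≤ c_{ij} for all i, j, then s_12(A,C) ≤ s_12(A,B) and s_12(A,C) ≤ s_12(B,C). -/
/-!
For nested families `a ≤ b ≤ c` the minima and maxima in each block are just the smaller and the
larger family, so every block ratio is `(∑ a)/(∑ c)`, `(∑ a)/(∑ b)` or `(∑ b)/(∑ c)`. Shrinking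
the denominator from `∑ c` to `∑ b`, or enlarging the numerator from `∑ a` to `∑ b`, can only
increase the ratio, and the weighted sums inherit this blockwise.
-/

open Finset

section Ruzicka

variable {ι α : Type*} [Fintype ι] [Field α] [LinearOrder α]

/-- The block ratio of the paper's `s_12`, known as the Ruzicka (weighted Jaccard) similarity. -/
def ruzicka (f g : ι → α) : α :=
  (∑ j, min (f j) (g j)) / ∑ j, max (f j) (g j)

theorem ruzicka_of_le {f g : ι → α} (hfg : ∀ j, f j ≤ g j) :
    ruzicka f g = (∑ j, f j) / ∑ j, g j := by
  simp only [ruzicka, min_eq_left (hfg _), max_eq_right (hfg _)]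

variable [IsStrictOrderedRing α]

theorem div_le_div_of_nonneg_of_le_of_le {x y z : α} (hx : 0 ≤ x) (hxy : x ≤ y) (hyz : y ≤ z) :
    x / z ≤ x / y := by
  rcases (hx.trans hxy).eq_or_lt with hy | hy
  · simp [le_antisymm (hy ▸ hxy) hx]
  · exact div_le_div_of_nonneg_left hx hy hyz

variable {f g h : ι → α}

theorem ruzicka_le_ruzicka_of_le_right (hf : ∀ j, 0 ≤ f j) (hfg : ∀ j, f j ≤ g j)
    (hgh : ∀ j, g j ≤ h j) : ruzicka f h ≤ ruzicka f g := by
  rw [ruzicka_of_le fun j => (hfg j).trans (hgh j), ruzicka_of_le hfg]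
  exact div_le_div_of_nonneg_of_le_of_le (sum_nonneg fun j _ => hf j)
    (sum_le_sum fun j _ => hfg j) (sum_le_sum fun j _ => hgh j)

theorem ruzicka_le_ruzicka_of_le_left (hf : ∀ j, 0 ≤ f j) (hfg : ∀ j, f j ≤ g j)
    (hgh : ∀ j, g j ≤ h j) : ruzicka f h ≤ ruzicka g h := by
  rw [ruzicka_of_le fun j => (hfg j).trans (hgh j), ruzicka_of_le hgh]
  exact div_le_div_of_nonneg_right (sum_le_sum fun j _ => hfg j)
    (sum_nonneg fun j _ => (hf j).trans ((hfg j).trans (hgh j)))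

end Ruzicka

theorem s12_mono_general (m : ℕ) (n : Fin m → ℕ)
    (w : Fin m → ℝ) (hw : ∀ i, w i ∈ Set.Icc (0:ℝ) 1)
    (a b c : (i : Fin m) → Fin (n i) → ℝ)
    (ha : ∀ i j, 0 < a i j)
    (hab : ∀ i j, a i j ≤ b i j) (hbc : ∀ i j, b i j ≤ c i j) :
    (∑ i, w i * ((∑ j, min (a i j) (c i j)) / (∑ j, max (a i j) (c i j))) ≤
      ∑ i, w i * ((∑ j, min (a i j) (b i j)) / (∑ j, max (a i j) (b i j)))) ∧
    (∑ i, w i * ((∑ j, min (a i j) (c i j)) / (∑ j, max (a i j) (c i j))) ≤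
      ∑ i, w i * ((∑ j, min (b i j) (c i j)) / (∑ j, max (b i j) (c i j)))) := by
  have ha' : ∀ i j, 0 ≤ a i j := fun i j => (ha i j).le
  refine ⟨sum_le_sum fun i _ => ?_, sum_le_sum fun i _ => ?_⟩
  · exact mul_le_mul_of_nonneg_left
      (ruzicka_le_ruzicka_of_le_right (ha' i) (hab i) (hbc i)) (hw i).1
  · exact mul_le_mul_of_nonneg_left
      (ruzicka_le_ruzicka_of_le_left (ha' i) (hab i) (hbc i)) (hw i).1

theorem s12_mono (m : ℕ) (hm : 0 < m) (n : Fin m → ℕ) (hn : ∀ i, 1 ≤ n i)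
    (w : Fin m → ℝ) (hw : ∀ i, w i ∈ Set.Icc (0:ℝ) 1) (hw1 : ∑ i, w i = 1)
    (a b c : (i : Fin m) → Fin (n i) → ℝ)
    (ha : ∀ i j, 0 < a i j)
    (hab : ∀ i j, a i j ≤ b i j) (hbc : ∀ i j, b i j ≤ c i j) :
    (∑ i, w i * ((∑ j, min (a i j) (c i j)) / (∑ j, max (a i j) (c i j))) ≤
      ∑ i, w i * ((∑ j, min (a i j) (b i j)) / (∑ j, max (a i j) (b i j)))) ∧
    (∑ i, w i * ((∑ j, min (a i j) (c i j)) / (∑ j, max (a i j) (c i j))) ≤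
      ∑ i, w i * ((∑ j, min (b i j) (c i j)) / (∑ j, max (b i j) (c i j)))) :=
  s12_mono_general m n w hw a b c ha hab hbc
end
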